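/- Every triangle whose side lengths all lie in [2, 2.51] has circumradius at most 2.51/√3. Moreover, if its circumradius is at least √2, then each side has length greater than 2.3, at least two sides exceed 2.41, and at least one side exceeds 2.44. -/
import Mathlib

noncomputable section

def ufun (a b c : ℝ) : ℝ := -a^2 - b^2 - c^2 + 2*a*b + 2*a*c + 2*b*c

/-- The circumradius of a triangle with side lengths a, b, c. -/
def eta (a b c : ℝ) : ℝ := a*b*c / Real.sqrt (ufun (a^2) (b^2) (c^2))

private lemma polymain (x y z : ℝ) (hx : 4 ≤ x) (hx' : x ≤ 6.3001) (hy : 4 ≤ y)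
    (hy' : y ≤ 6.3001) (hz : 4 ≤ z) (hz' : z ≤ 6.3001) :
    3*(x*y*z) ≤ 6.3001 * ufun x y z := by
  simp only [ufun]
  nlinarith [mul_nonneg (mul_nonneg (sub_nonneg.2 hx) (sub_nonneg.2 hy)) (sub_nonneg.2 hz),
    mul_nonneg (mul_nonneg (sub_nonneg.2 hx') (sub_nonneg.2 hy')) (sub_nonneg.2 hz'),
    mul_nonneg (sub_nonneg.2 hx) (sub_nonneg.2 hy'), mul_nonneg (sub_nonneg.2 hy) (sub_nonneg.2 hz'),
    mul_nonneg (sub_nonneg.2 hz) (sub_nonneg.2 hx'),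
    mul_nonneg (sub_nonneg.2 hx') (sub_nonneg.2 hy), mul_nonneg (sub_nonneg.2 hy') (sub_nonneg.2 hz),
    mul_nonneg (sub_nonneg.2 hz') (sub_nonneg.2 hx)]

private lemma poly1 (x y z : ℝ) (hx : 4 ≤ x) (hx' : x ≤ 5.29) (hy : 4 ≤ y)
    (hy' : y ≤ 6.3001) (hz : 4 ≤ z) (hz' : z ≤ 6.3001) :
    x*y*z < 2 * ufun x y z := by
  simp only [ufun]
  nlinarith [mul_nonneg (mul_nonneg (sub_nonneg.2 hx) (sub_nonneg.2 hy)) (sub_nonneg.2 hz),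
    mul_nonneg (mul_nonneg (sub_nonneg.2 hx') (sub_nonneg.2 hy')) (sub_nonneg.2 hz'),
    mul_nonneg (sub_nonneg.2 hx) (sub_nonneg.2 hy'), mul_nonneg (sub_nonneg.2 hy) (sub_nonneg.2 hz'),
    mul_nonneg (sub_nonneg.2 hz) (sub_nonneg.2 hx'),
    mul_nonneg (sub_nonneg.2 hx') (sub_nonneg.2 hy), mul_nonneg (sub_nonneg.2 hy') (sub_nonneg.2 hz),
    mul_nonneg (sub_nonneg.2 hz') (sub_nonneg.2 hx),
    mul_nonneg (mul_nonneg (sub_nonneg.2 hx') (sub_nonneg.2 hy)) (sub_nonneg.2 hz),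
    mul_nonneg (mul_nonneg (sub_nonneg.2 hx) (sub_nonneg.2 hy')) (sub_nonneg.2 hz),
    mul_nonneg (mul_nonneg (sub_nonneg.2 hx) (sub_nonneg.2 hy)) (sub_nonneg.2 hz')]

private lemma poly2 (x y z : ℝ) (hx : 4 ≤ x) (hx' : x ≤ 5.8081) (hy : 4 ≤ y)
    (hy' : y ≤ 5.8081) (hz : 4 ≤ z) (hz' : z ≤ 6.3001) :
    x*y*z < 2 * ufun x y z := by
  simp only [ufun]
  nlinarith [mul_nonneg (mul_nonneg (sub_nonneg.2 hx) (sub_nonneg.2 hy)) (sub_nonneg.2 hz),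
    mul_nonneg (mul_nonneg (sub_nonneg.2 hx') (sub_nonneg.2 hy')) (sub_nonneg.2 hz'),
    mul_nonneg (sub_nonneg.2 hx) (sub_nonneg.2 hy'), mul_nonneg (sub_nonneg.2 hy) (sub_nonneg.2 hz'),
    mul_nonneg (sub_nonneg.2 hz) (sub_nonneg.2 hx'),
    mul_nonneg (sub_nonneg.2 hx') (sub_nonneg.2 hy), mul_nonneg (sub_nonneg.2 hy') (sub_nonneg.2 hz),
    mul_nonneg (sub_nonneg.2 hz') (sub_nonneg.2 hx),
    mul_nonneg (mul_nonneg (sub_nonneg.2 hx') (sub_nonneg.2 hy)) (sub_nonneg.2 hz),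
    mul_nonneg (mul_nonneg (sub_nonneg.2 hx) (sub_nonneg.2 hy')) (sub_nonneg.2 hz),
    mul_nonneg (mul_nonneg (sub_nonneg.2 hx) (sub_nonneg.2 hy)) (sub_nonneg.2 hz')]

private lemma poly3 (x y z : ℝ) (hx : 4 ≤ x) (hx' : x ≤ 5.9536) (hy : 4 ≤ y)
    (hy' : y ≤ 5.9536) (hz : 4 ≤ z) (hz' : z ≤ 5.9536) :
    x*y*z < 2 * ufun x y z := by
  simp only [ufun]
  nlinarith [mul_nonneg (mul_nonneg (sub_nonneg.2 hx) (sub_nonneg.2 hy)) (sub_nonneg.2 hz),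
    mul_nonneg (mul_nonneg (sub_nonneg.2 hx') (sub_nonneg.2 hy')) (sub_nonneg.2 hz'),
    mul_nonneg (sub_nonneg.2 hx) (sub_nonneg.2 hy'), mul_nonneg (sub_nonneg.2 hy) (sub_nonneg.2 hz'),
    mul_nonneg (sub_nonneg.2 hz) (sub_nonneg.2 hx'),
    mul_nonneg (sub_nonneg.2 hx') (sub_nonneg.2 hy), mul_nonneg (sub_nonneg.2 hy') (sub_nonneg.2 hz),
    mul_nonneg (sub_nonneg.2 hz') (sub_nonneg.2 hx),
    mul_nonneg (mul_nonneg (sub_nonneg.2 hx') (sub_nonneg.2 hy)) (sub_nonneg.2 hz),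
    mul_nonneg (mul_nonneg (sub_nonneg.2 hx) (sub_nonneg.2 hy')) (sub_nonneg.2 hz),
    mul_nonneg (mul_nonneg (sub_nonneg.2 hx) (sub_nonneg.2 hy)) (sub_nonneg.2 hz')]

set_option maxHeartbeats 1000000 in
/-- Every triangle with sides in [2,2.51] has circumradius at most 2.51/√3;
if moreover the circumradius is at least √2, then each side exceeds 2.3,
at least two sides exceed 2.41, and at least one side exceeds 2.44. -/
theorem eta_bounds
    (a b c : ℝ) (ha : a ∈ Set.Icc (2:ℝ) 2.51) (hb : b ∈ Set.Icc (2:ℝ) 2.51)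
    (hc : c ∈ Set.Icc (2:ℝ) 2.51) :
    eta a b c ≤ 2.51 / Real.sqrt 3 ∧
    (Real.sqrt 2 ≤ eta a b c →
      (2.3 < a ∧ 2.3 < b ∧ 2.3 < c) ∧
      ((2.41 < a ∧ 2.41 < b) ∨ (2.41 < a ∧ 2.41 < c) ∨ (2.41 < b ∧ 2.41 < c)) ∧
      (2.44 < a ∨ 2.44 < b ∨ 2.44 < c)) := by
  obtain ⟨ha1, ha2⟩ := ha
  obtain ⟨hb1, hb2⟩ := hb
  obtain ⟨hc1, hc2⟩ := hc
  have hx : 4 ≤ a^2 := by nlinarith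
  have hx' : a^2 ≤ 6.3001 := by nlinarith
  have hy : 4 ≤ b^2 := by nlinarith
  have hy' : b^2 ≤ 6.3001 := by nlinarith
  have hz : 4 ≤ c^2 := by nlinarith
  have hz' : c^2 ≤ 6.3001 := by nlinarith
  have hu : 0 < ufun (a^2) (b^2) (c^2) := by
    have hfac : ufun (a^2) (b^2) (c^2) = (a+b+c)*(-a+b+c)*(a-b+c)*(a+b-c) := by
      simp only [ufun]; ring
    rw [hfac]
    have h1 : (0:ℝ) < a+b+c := by linarith
    have h2 : (0:ℝ) < -a+b+c := by linarith
    have h3 : (0:ℝ) < a-b+c := by linarith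
    have h4 : (0:ℝ) < a+b-c := by linarith
    positivity
  have hs : 0 < Real.sqrt (ufun (a^2) (b^2) (c^2)) := Real.sqrt_pos.2 hu
  have habc : (0:ℝ) < a*b*c := by positivity
  constructor
  · -- eta ≤ 2.51/√3
    rw [eta, div_le_div_iff₀ hs (Real.sqrt_pos.2 (by norm_num))]
    have e1 : a*b*c * Real.sqrt 3 = Real.sqrt (3 * (a*b*c)^2) := by
      rw [Real.sqrt_mul (by norm_num), Real.sqrt_sq habc.le]; ring
    have e2 : 2.51 * Real.sqrt (ufun (a^2) (b^2) (c^2)) =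
        Real.sqrt (6.3001 * ufun (a^2) (b^2) (c^2)) := by
      rw [Real.sqrt_mul (by norm_num), show (6.3001:ℝ) = 2.51^2 by norm_num,
        Real.sqrt_sq (by norm_num)]
    rw [e1, e2]
    apply Real.sqrt_le_sqrt
    have := polymain (a^2) (b^2) (c^2) hx hx' hy hy' hz hz'
    nlinarith [this]
  · intro h
    -- derive key: 2 * u ≤ a^2*b^2*c^2
    have hstep : Real.sqrt 2 * Real.sqrt (ufun (a^2) (b^2) (c^2)) ≤ a*b*c := by
      rw [eta] at h
      calc Real.sqrt 2 * Real.sqrt (ufun (a^2) (b^2) (c^2))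
          ≤ (a*b*c / Real.sqrt (ufun (a^2) (b^2) (c^2))) * Real.sqrt (ufun (a^2) (b^2) (c^2)) := by
            apply mul_le_mul_of_nonneg_right h hs.le
        _ = a*b*c := by field_simp
    have key : 2 * ufun (a^2) (b^2) (c^2) ≤ a^2*b^2*c^2 := by
      have hsq := mul_self_le_mul_self (by positivity) hstep
      have e3 : (Real.sqrt 2 * Real.sqrt (ufun (a^2) (b^2) (c^2))) *
          (Real.sqrt 2 * Real.sqrt (ufun (a^2) (b^2) (c^2))) = 2 * ufun (a^2) (b^2) (c^2) := by
        rw [show ∀ p q : ℝ, (p*q)*(p*q) = (p*p)*(q*q) from fun p q => by ring,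
          Real.mul_self_sqrt (by norm_num), Real.mul_self_sqrt hu.le]
      rw [e3] at hsq
      nlinarith [hsq]
    have usym1 : ufun (a^2) (c^2) (b^2) = ufun (a^2) (b^2) (c^2) := by simp only [ufun]; ring
    have usym2 : ufun (b^2) (c^2) (a^2) = ufun (a^2) (b^2) (c^2) := by simp only [ufun]; ring
    have sqb : ∀ t : ℝ, ∀ M : ℝ, 2 ≤ t → t ≤ M → t^2 ≤ M^2 := fun t M h1 h2 => by nlinarith
    refine ⟨⟨?_, ?_, ?_⟩, ?_, ?_⟩
    · by_contra hle; push_neg at hle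
      have := poly1 (a^2) (b^2) (c^2) hx
        (by have := sqb a 2.3 ha1 hle; norm_num at this ⊢; linarith) hy hy' hz hz'
      linarith
    · by_contra hle; push_neg at hle
      have := poly1 (b^2) (c^2) (a^2) hy
        (by have := sqb b 2.3 hb1 hle; norm_num at this ⊢; linarith) hz hz' hx hx'
      rw [usym2] at this; linarith
    · by_contra hle; push_neg at hle
      have usym3 : ufun (c^2) (a^2) (b^2) = ufun (a^2) (b^2) (c^2) := by
        simp only [ufun]; ring
      have := poly1 (c^2) (a^2) (b^2) hz
        (by have := sqb c 2.3 hc1 hle; norm_num at this ⊢; linarith) hx hx' hy hy'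
      rw [usym3] at this; linarith
    · -- at least two sides > 2.41
      rcases le_or_gt a 2.41 with haa | haa
      · rcases le_or_gt b 2.41 with hbb | hbb
        · exfalso
          have := poly2 (a^2) (b^2) (c^2) hx
            (by have := sqb a 2.41 ha1 haa; norm_num at this ⊢; linarith) hy
            (by have := sqb b 2.41 hb1 hbb; norm_num at this ⊢; linarith) hz hz'
          linarith
        · rcases le_or_gt c 2.41 with hcc | hcc
          · exfalso
            have := poly2 (a^2) (c^2) (b^2) hx
              (by have := sqb a 2.41 ha1 haa; norm_num at this ⊢; linarith) hz
              (by have := sqb c 2.41 hc1 hcc; norm_num at this ⊢; linarith) hy hy'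
            rw [usym1] at this
            have e : a^2*c^2*b^2 = a^2*b^2*c^2 := by ring
            linarith
          · exact Or.inr (Or.inr ⟨hbb, hcc⟩)
      · rcases le_or_gt b 2.41 with hbb | hbb
        · rcases le_or_gt c 2.41 with hcc | hcc
          · exfalso
            have := poly2 (b^2) (c^2) (a^2) hy
              (by have := sqb b 2.41 hb1 hbb; norm_num at this ⊢; linarith) hz
              (by have := sqb c 2.41 hc1 hcc; norm_num at this ⊢; linarith) hx hx'
            rw [usym2] at this
            have e : b^2*c^2*a^2 = a^2*b^2*c^2 := by ring
            linarith
          · exact Or.inr (Or.inl ⟨haa, hcc⟩)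
        · exact Or.inl ⟨haa, hbb⟩
    · -- at least one side > 2.44
      by_contra hle; push_neg at hle
      obtain ⟨h1, h2, h3⟩ := hle
      have := poly3 (a^2) (b^2) (c^2) hx
        (by have := sqb a 2.44 ha1 h1; norm_num at this ⊢; linarith) hy
        (by have := sqb b 2.44 hb1 h2; norm_num at this ⊢; linarith) hz
        (by have := sqb c 2.44 hc1 h3; norm_num at this ⊢; linarith)
      linarith
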